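/- arXiv:2001.08478 — 3 statements merged into one kernel-verified Lean document; each statement's English description precedes it below -/
import Mathlib

section
/- Let (Σ, <) be a well-founded partial order. The energized star relation ▷▷ is strongly normalizing on all trees over Σ ∪ Σ^ω: there is no infinite sequence t0 ▷▷ t1 ▷▷ t2 ▷▷ ⋯. -/
namespace StarGames

/-- Unranked terms over signature `σ` and variables `X`. -/
inductive Term (σ : Type) (X : Type) : Type
  | var : X → Term σ X
  | app : σ → List (Term σ X) → Term σ X

variable {σ σ' X : Type}

/-- Relabeling of symbols. -/
def Term.relabel (h : σ → σ') : Term σ X → Term σ' X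
  | .var x => .var x
  | .app f ts => .app (h f) (ts.attach.map fun ⟨t, _⟩ => t.relabel h)
decreasing_by
  have := List.sizeOf_lt_of_mem ‹_ ∈ ts›
  simp only [Term.app.sizeOf_spec]
  omega

/-- Closure of a root-step relation under contexts (rewriting inside one argument). -/
inductive Rewrite (R : Term σ X → Term σ X → Prop) : Term σ X → Term σ X → Prop
  | root {s t : Term σ X} : R s t → Rewrite R s t
  | congr {s t : Term σ X} (f : σ) (pre post : List (Term σ X)) :
      Rewrite R s t →
      Rewrite R (Term.app f (pre ++ s :: post)) (Term.app f (pre ++ t :: post))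

/-- Root steps of the swap TRS:  f(u⃗,x,y,w⃗) → f(u⃗,y,x,w⃗). -/
inductive SwapRoot : Term σ X → Term σ X → Prop
  | swap (f : σ) (us : List (Term σ X)) (x y : Term σ X) (ws : List (Term σ X)) :
      SwapRoot (Term.app f (us ++ x :: y :: ws)) (Term.app f (us ++ y :: x :: ws))

/-- One swap step, anywhere in a term. -/
def SwapStep : Term σ X → Term σ X → Prop := Rewrite (SwapRoot (σ := σ) (X := X))

/-- `≃` : the equivalence relation generated by swap steps. -/
def TermEquiv : Term σ X → Term σ X → Prop := Relation.EqvGen SwapStep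

def treeSetoid (σ X : Type) : Setoid (Term σ X) :=
  ⟨TermEquiv, Relation.EqvGen.is_equivalence _⟩

/-- (Unordered) trees: terms modulo permutation of arguments. -/
def Tree (σ X : Type) := Quotient (treeSetoid σ X)

def Tree.mk (t : Term σ X) : Tree σ X := Quotient.mk (treeSetoid σ X) t

/-- Rewrite relation induced on trees by a root-step relation. -/
def TreeRel (R : Term σ X → Term σ X → Prop) : Tree σ X → Tree σ X → Prop :=
  fun a b => ∃ s t : Term σ X, a = Tree.mk s ∧ b = Tree.mk t ∧ Rewrite R s t

/-- Terms all of whose symbols satisfy `p`. -/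
inductive Uses (p : σ → Prop) : Term σ X → Prop
  | var (x : X) : Uses p (Term.var x)
  | app (f : σ) (ts : List (Term σ X)) :
      p f → (∀ t ∈ ts, Uses p t) → Uses p (Term.app f ts)

end StarGames

namespace StarGames

variable {σ X : Type}

/-- Root steps of the TRS `Star^ω` over the energized signature `Σ ∪ Σ^ω`.
`Sum.inl f` is the plain symbol `f ∈ Σ` and `Sum.inr (f, n)` is the energized
symbol `f^n ∈ Σ^ω`. -/
inductive StarOmegaRoot (lt : σ → σ → Prop) :
    Term (σ ⊕ σ × ℕ) X → Term (σ ⊕ σ × ℕ) X → Prop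
  | put (f : σ) (n : ℕ) (ts : List (Term (σ ⊕ σ × ℕ) X)) :
      StarOmegaRoot lt (.app (.inl f) ts) (.app (.inr (f, n)) ts)
  | select (f : σ) (n : ℕ) (xs : List (Term (σ ⊕ σ × ℕ) X))
      (y : Term (σ ⊕ σ × ℕ) X) (zs : List (Term (σ ⊕ σ × ℕ) X)) :
      StarOmegaRoot lt (.app (.inr (f, n + 1)) (xs ++ y :: zs)) y
  | copy (f g : σ) (n k : ℕ) (ts : List (Term (σ ⊕ σ × ℕ) X)) :
      lt g f →
      StarOmegaRoot lt (.app (.inr (f, n + 1)) ts)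
        (.app (.inl g) (List.replicate k (Term.app (.inr (f, n)) ts)))
  | down (f g : σ) (n k : ℕ) (xs ys zs : List (Term (σ ⊕ σ × ℕ) X)) :
      StarOmegaRoot lt
        (.app (.inr (f, n + 1)) (xs ++ Term.app (.inl g) ys :: zs))
        (.app (.inl f) (xs ++ List.replicate k (Term.app (.inr (g, n)) ys) ++ zs))


section Aux
open Ordinal Order
open Ordinal in
noncomputable def nadd : Ordinal.{0} → Ordinal.{0} → Ordinal.{0}
  | a, b => max (blsub.{0, 0} a fun a' _ => nadd a' b) (blsub.{0, 0} b fun b' _ => nadd a b')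
termination_by a b => (a, b)
decreasing_by
  · exact Prod.Lex.left _ _ ‹_›
  · exact Prod.Lex.right _ ‹_›

infixl:65 " ♯ " => nadd

open Ordinal in
theorem nadd_def (a b : Ordinal.{0}) :
    a ♯ b = max (blsub.{0, 0} a fun a' _ => a' ♯ b) (blsub.{0, 0} b fun b' _ => a ♯ b') := by
  rw [nadd]

open Ordinal in
theorem lt_nadd_iff {a b c : Ordinal.{0}} :
    a < b ♯ c ↔ (∃ b' < b, a ≤ b' ♯ c) ∨ ∃ c' < c, a ≤ b ♯ c' := by
  rw [nadd_def]
  simp [lt_blsub_iff]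

open Ordinal in
theorem nadd_le_iff {a b c : Ordinal.{0}} :
    b ♯ c ≤ a ↔ (∀ b' < b, b' ♯ c < a) ∧ ∀ c' < c, b ♯ c' < a := by
  rw [nadd_def]
  simp [blsub_le_iff]

theorem nadd_lt_nadd_left {b c : Ordinal.{0}} (h : b < c) (a : Ordinal.{0}) : a ♯ b < a ♯ c :=
  lt_nadd_iff.2 (Or.inr ⟨b, h, le_rfl⟩)

theorem nadd_lt_nadd_right {b c : Ordinal.{0}} (h : b < c) (a : Ordinal.{0}) : b ♯ a < c ♯ a :=
  lt_nadd_iff.2 (Or.inl ⟨b, h, le_rfl⟩)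

theorem nadd_le_nadd_left {b c : Ordinal.{0}} (h : b ≤ c) (a : Ordinal.{0}) : a ♯ b ≤ a ♯ c := by
  rcases h.lt_or_eq with h | rfl
  · exact (nadd_lt_nadd_left h a).le
  · exact le_rfl

theorem nadd_le_nadd_right {b c : Ordinal.{0}} (h : b ≤ c) (a : Ordinal.{0}) : b ♯ a ≤ c ♯ a := by
  rcases h.lt_or_eq with h | rfl
  · exact (nadd_lt_nadd_right h a).le
  · exact le_rfl

theorem nadd_lt_nadd {a b c d : Ordinal.{0}} (h₁ : a < b) (h₂ : c < d) : a ♯ c < b ♯ d :=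
  (nadd_lt_nadd_right h₁ c).trans (nadd_lt_nadd_left h₂ b)

theorem nadd_comm (a b : Ordinal.{0}) : a ♯ b = b ♯ a := by
  induction a using Ordinal.induction generalizing b with
  | _ a IHa =>
  induction b using Ordinal.induction with
  | _ b IHb =>
  apply le_antisymm
  · rw [nadd_le_iff]
    refine ⟨fun a' ha' => ?_, fun b' hb' => ?_⟩
    · rw [IHa a' ha' b]; exact nadd_lt_nadd_left ha' b
    · rw [IHb b' hb']; exact nadd_lt_nadd_right hb' a
  · rw [nadd_le_iff]
    refine ⟨fun b' hb' => ?_, fun a' ha' => ?_⟩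
    · rw [← IHb b' hb']; exact nadd_lt_nadd_left hb' a
    · rw [← IHa a' ha' b]; exact nadd_lt_nadd_right ha' b

@[simp] theorem nadd_zero (a : Ordinal.{0}) : a ♯ 0 = a := by
  induction a using Ordinal.induction with
  | _ a IH =>
  apply le_antisymm
  · rw [nadd_le_iff]
    refine ⟨fun a' ha' => ?_, fun c hc => (not_lt_zero hc).elim⟩
    rw [IH a' ha']; exact ha'
  · apply le_of_forall_lt
    intro d hd
    rw [← IH d hd]
    exact nadd_lt_nadd_right hd 0

@[simp] theorem zero_nadd (a : Ordinal.{0}) : 0 ♯ a = a := by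
  rw [nadd_comm, nadd_zero]

theorem le_self_nadd {a b : Ordinal.{0}} : a ≤ a ♯ b := by
  simpa using nadd_le_nadd_left (show (0 : Ordinal.{0}) ≤ b from zero_le) a

theorem le_nadd_self {a b : Ordinal.{0}} : a ≤ b ♯ a := by
  rw [nadd_comm]; exact le_self_nadd

theorem nadd_assoc (a b c : Ordinal.{0}) : a ♯ b ♯ c = a ♯ (b ♯ c) := by
  induction a using Ordinal.induction generalizing b c with
  | _ a IHa =>
  induction b using Ordinal.induction generalizing c with
  | _ b IHb =>
  induction c using Ordinal.induction with
  | _ c IHc =>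
  apply le_antisymm
  · rw [nadd_le_iff]
    refine ⟨fun d hd => ?_, fun c' hc' => ?_⟩
    · rcases lt_nadd_iff.1 hd with ⟨a', ha', hle⟩ | ⟨b', hb', hle⟩
      · calc d ♯ c ≤ a' ♯ b ♯ c := nadd_le_nadd_right hle c
          _ = a' ♯ (b ♯ c) := IHa a' ha' b c
          _ < a ♯ (b ♯ c) := nadd_lt_nadd_right ha' _
      · calc d ♯ c ≤ a ♯ b' ♯ c := nadd_le_nadd_right hle c
          _ = a ♯ (b' ♯ c) := IHb b' hb' c
          _ < a ♯ (b ♯ c) := nadd_lt_nadd_left (nadd_lt_nadd_right hb' c) a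
    · rw [IHc c' hc']
      exact nadd_lt_nadd_left (nadd_lt_nadd_left hc' b) a
  · rw [nadd_le_iff]
    refine ⟨fun a' ha' => ?_, fun e he => ?_⟩
    · rw [← IHa a' ha' b c]
      exact nadd_lt_nadd_right (nadd_lt_nadd_right ha' b) c
    · rcases lt_nadd_iff.1 he with ⟨b', hb', hle⟩ | ⟨c', hc', hle⟩
      · calc a ♯ e ≤ a ♯ (b' ♯ c) := nadd_le_nadd_left hle a
          _ = a ♯ b' ♯ c := (IHb b' hb' c).symm
          _ < a ♯ b ♯ c := nadd_lt_nadd_right (nadd_lt_nadd_left hb' a) c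
      · calc a ♯ e ≤ a ♯ (b ♯ c') := nadd_le_nadd_left hle a
          _ = a ♯ b ♯ c' := (IHc c' hc').symm
          _ < a ♯ b ♯ c := nadd_lt_nadd_left hc' _

theorem nadd_left_comm (a b c : Ordinal.{0}) : a ♯ (b ♯ c) = b ♯ (a ♯ c) := by
  rw [← nadd_assoc, nadd_comm a b, nadd_assoc]

theorem add_le_nadd (a b : Ordinal.{0}) : a + b ≤ a ♯ b := by
  induction b using Ordinal.induction with
  | _ b IH =>
  apply le_of_forall_lt
  intro d hd
  rcases lt_or_ge d a with h | h
  · exact h.trans_le le_self_nadd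
  · have hd' : d - a < b := by
      rw [← Ordinal.add_sub_cancel_of_le h] at hd
      exact (add_lt_add_iff_left a).1 hd
    calc d = a + (d - a) := (Ordinal.add_sub_cancel_of_le h).symm
      _ ≤ a ♯ (d - a) := IH _ hd'
      _ < a ♯ b := nadd_lt_nadd_left hd' a

noncomputable def veb : Ordinal.{0} → Ordinal.{0} → Ordinal.{0} := fun a =>
  if a = 0 then fun x => omega0 ^ x
  else derivFamily (fun b : Set.Iio a => veb b.1)
termination_by a => a
decreasing_by exact b.2

theorem isNormal_veb (a : Ordinal) : IsNormal (veb a) := by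
  rw [veb]
  split
  · exact isNormal_opow one_lt_omega0
  · exact isNormal_derivFamily _

theorem veb_fp {b a : Ordinal} (h : b < a) (x : Ordinal) :
    veb b (veb a x) = veb a x := by
  have ha : a ≠ 0 := by rintro rfl; exact (not_lt_zero h)
  have h2 : veb a = derivFamily (fun b : Set.Iio a => veb b.1) := by
    rw [veb, if_neg ha]
  rw [h2]
  exact derivFamily_fp (f := fun b : Set.Iio a => veb b.1) (i := ⟨b, h⟩) (isNormal_veb b) x

theorem le_veb (a x : Ordinal) : x ≤ veb a x := (isNormal_veb a).strictMono.le_apply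

theorem veb_lt {a x y : Ordinal} (h : x < y) : veb a x < veb a y :=
  (isNormal_veb a).strictMono h

theorem veb_zero (x : Ordinal) : veb 0 x = omega0 ^ x := by rw [veb]; simp

theorem one_add_pos (ρ : Ordinal) : (0 : Ordinal) < 1 + ρ :=
  lt_of_lt_of_le zero_lt_one le_self_add

theorem opow_veb (ρ x : Ordinal) : omega0 ^ (veb (1 + ρ) x) = veb (1 + ρ) x := by
  have := veb_fp (one_add_pos ρ) x
  rwa [veb_zero] at this

theorem veb_pos (ρ x : Ordinal) : 0 < veb (1 + ρ) x := by
  rcases eq_zero_or_pos (veb (1 + ρ) x) with h | h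
  · exfalso
    have := opow_veb ρ x
    rw [h, opow_zero] at this
    exact one_ne_zero this
  · exact h

theorem veb_isLimit (ρ x : Ordinal) : IsSuccLimit (veb (1 + ρ) x) := by
  rw [← opow_veb ρ x]
  exact isSuccLimit_opow_left isSuccLimit_omega0 (veb_pos ρ x).ne'

theorem omega0_lt_veb (ρ x : Ordinal) : omega0 < veb (1 + ρ) x := by
  have h1 : omega0 ≤ veb (1 + ρ) x := omega0_le_of_isSuccLimit (veb_isLimit ρ x)
  calc omega0 = omega0 ^ (1 : Ordinal) := (opow_one _).symm
    _ < omega0 ^ omega0 := (opow_lt_opow_iff_right one_lt_omega0).2 one_lt_omega0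
    _ ≤ omega0 ^ (veb (1 + ρ) x) := opow_le_opow_right omega0_pos h1
    _ = veb (1 + ρ) x := opow_veb ρ x

theorem succ_lt_veb {ρ x y : Ordinal} (h : y < veb (1 + ρ) x) : y + 1 < veb (1 + ρ) x := by
  rw [Ordinal.add_one_eq_succ]
  exact (veb_isLimit ρ x).succ_lt h

theorem opow_lt_veb {ρ x y : Ordinal} (h : y < veb (1 + ρ) x) :
    omega0 ^ y < veb (1 + ρ) x := by
  calc omega0 ^ y < omega0 ^ (veb (1 + ρ) x) := (opow_lt_opow_iff_right one_lt_omega0).2 h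
    _ = veb (1 + ρ) x := opow_veb ρ x

theorem veb_collapse {ρ' ρ x u : Ordinal} (h : ρ' < ρ) (hu : u < veb (1 + ρ) x) :
    veb (1 + ρ') u < veb (1 + ρ) x := by
  have hfp := veb_fp (b := 1 + ρ') (a := 1 + ρ) ((add_lt_add_iff_left 1).2 h) x
  calc veb (1 + ρ') u < veb (1 + ρ') (veb (1 + ρ) x) := veb_lt hu
    _ = veb (1 + ρ) x := hfp
private theorem nadd_omega0_opow_aux {b : Ordinal}
    (hb : ∀ x < omega0 ^ b, ∀ y < omega0 ^ b, x ♯ y < omega0 ^ b) :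
    ∀ N : ℕ, ∀ n m : ℕ, ∀ r z : Ordinal, n + m = N → r < omega0 ^ b → z < omega0 ^ b →
      (omega0 ^ b * n + r) ♯ (omega0 ^ b * m + z) = omega0 ^ b * (n + m : ℕ) + (r ♯ z) := by
  have hw0 : (omega0 ^ b : Ordinal) ≠ 0 := (opow_pos _ omega0_pos).ne'
  intro N
  induction N using Nat.strong_induction_on with
  | _ N IHN =>
  -- inner induction on r ♯ z
  suffices H : ∀ w : Ordinal, ∀ n m : ℕ, n + m = N → ∀ r z : Ordinal,
      r < omega0 ^ b → z < omega0 ^ b → r ♯ z = w →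
      (omega0 ^ b * n + r) ♯ (omega0 ^ b * m + z) = omega0 ^ b * (n + m : ℕ) + (r ♯ z) by
    intro n m r z h hr hz; exact H (r ♯ z) n m h r z hr hz rfl
  intro w
  induction w using Ordinal.induction with
  | _ w IHw =>
  intro n m hN r z hr hz hw
  subst hw hN
  -- key: decomposition of u < ω^b * n + r
  have decomp : ∀ (n : ℕ) (r : Ordinal), r < omega0 ^ b → ∀ u, u < omega0 ^ b * n + r →
      (∃ k : ℕ, k < n ∧ ∃ r'' : Ordinal, r'' < omega0 ^ b ∧ u = omega0 ^ b * k + r'') ∨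
      (∃ r' : Ordinal, r' < r ∧ u = omega0 ^ b * n + r') := by
    intro n r hr u hu
    rcases lt_or_ge u (omega0 ^ b * n) with h | h
    · left
      have hdm := Ordinal.div_add_mod u (omega0 ^ b)
      have hq : u / omega0 ^ b < (n : Ordinal) := (Ordinal.div_lt hw0).2 h
      have hqω : u / omega0 ^ b < omega0 := hq.trans (nat_lt_omega0 n)
      obtain ⟨k, hk⟩ := lt_omega0.1 hqω
      refine ⟨k, ?_, u % omega0 ^ b, Ordinal.mod_lt u hw0, ?_⟩
      · exact_mod_cast hk ▸ hq
      · rw [hk] at hdm; exact hdm.symm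
    · right
      refine ⟨u - omega0 ^ b * n, ?_, (Ordinal.add_sub_cancel_of_le h).symm⟩
      have : omega0 ^ b * n + (u - omega0 ^ b * n) < omega0 ^ b * n + r := by
        rwa [Ordinal.add_sub_cancel_of_le h]
      exact (add_lt_add_iff_left _).1 this
  apply le_antisymm
  · rw [nadd_le_iff]
    constructor
    · intro u hu
      rcases decomp n r hr u hu with ⟨k, hk, r'', hr'', rfl⟩ | ⟨r', hr', rfl⟩
      · have heq := IHN (k + m) (by omega) k m r'' z rfl hr'' hz
        rw [heq]
        calc omega0 ^ b * (k + m : ℕ) + (r'' ♯ z)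
            < omega0 ^ b * (k + m : ℕ) + omega0 ^ b := by
              exact (add_lt_add_iff_left _).2 (hb _ hr'' _ hz)
          _ = omega0 ^ b * ((k + m : ℕ) + 1) := by rw [mul_add_one]
          _ ≤ omega0 ^ b * (n + m : ℕ) := by
              apply mul_le_mul_right
              exact_mod_cast Nat.succ_le_of_lt (by omega)
          _ ≤ omega0 ^ b * (n + m : ℕ) + (r ♯ z) := le_self_add
      · have hlt : r' ♯ z < r ♯ z := nadd_lt_nadd_right hr' z
        rw [IHw _ hlt n m rfl r' z (hr'.trans hr) hz rfl]
        exact (add_lt_add_iff_left _).2 hlt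
    · intro v hv
      rcases decomp m z hz v hv with ⟨k, hk, z'', hz'', rfl⟩ | ⟨z', hz', rfl⟩
      · rw [nadd_comm]
        have heq := IHN (k + n) (by omega) k n z'' r rfl hz'' hr
        rw [heq]
        calc omega0 ^ b * (k + n : ℕ) + (z'' ♯ r)
            < omega0 ^ b * (k + n : ℕ) + omega0 ^ b := by
              exact (add_lt_add_iff_left _).2 (hb _ hz'' _ hr)
          _ = omega0 ^ b * ((k + n : ℕ) + 1) := by rw [mul_add_one]
          _ ≤ omega0 ^ b * (n + m : ℕ) := by
              apply mul_le_mul_right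
              exact_mod_cast Nat.succ_le_of_lt (by omega)
          _ ≤ omega0 ^ b * (n + m : ℕ) + (r ♯ z) := le_self_add
      · have hlt : r ♯ z' < r ♯ z := nadd_lt_nadd_left hz' r
        rw [IHw _ hlt n m rfl r z' hr (hz'.trans hz) rfl]
        exact (add_lt_add_iff_left _).2 hlt
  · apply le_of_forall_lt
    intro w hwlt
    have hD : omega0 ^ b * (n + m : ℕ) ≤ (omega0 ^ b * n + r) ♯ (omega0 ^ b * m + z) := by
      calc (omega0 ^ b * (n + m : ℕ) : Ordinal) = omega0 ^ b * n + omega0 ^ b * m := by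
            rw [Nat.cast_add, mul_add]
        _ ≤ (omega0 ^ b * n + r) + (omega0 ^ b * m + z) := by
            rw [add_assoc]
            apply add_le_add_right
            exact le_trans (le_self_add) (le_add_self)
        _ ≤ (omega0 ^ b * n + r) ♯ (omega0 ^ b * m + z) := add_le_nadd _ _
    rcases lt_or_ge w (omega0 ^ b * (n + m : ℕ)) with h | h
    · exact h.trans_le hD
    · have hweq : omega0 ^ b * (n + m : ℕ) + (w - omega0 ^ b * (n + m : ℕ)) = w :=
        Ordinal.add_sub_cancel_of_le h
      set ξ := w - omega0 ^ b * (n + m : ℕ) with hξ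
      have hξlt : ξ < r ♯ z := by
        have := hwlt
        rw [← hweq] at this
        exact (add_lt_add_iff_left _).1 this
      rcases lt_nadd_iff.1 hξlt with ⟨r', hr', hle⟩ | ⟨z', hz', hle⟩
      · have heq := IHw _ (nadd_lt_nadd_right hr' z) n m rfl r' z (hr'.trans hr) hz rfl
        calc w = omega0 ^ b * (n + m : ℕ) + ξ := hweq.symm
          _ ≤ omega0 ^ b * (n + m : ℕ) + (r' ♯ z) := add_le_add_right hle _
          _ = (omega0 ^ b * n + r') ♯ (omega0 ^ b * m + z) := heq.symm
          _ < (omega0 ^ b * n + r) ♯ (omega0 ^ b * m + z) :=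
            nadd_lt_nadd_right ((add_lt_add_iff_left _).2 hr') _
      · have heq := IHw _ (nadd_lt_nadd_left hz' r) n m rfl r z' hr (hz'.trans hz) rfl
        calc w = omega0 ^ b * (n + m : ℕ) + ξ := hweq.symm
          _ ≤ omega0 ^ b * (n + m : ℕ) + (r ♯ z') := add_le_add_right hle _
          _ = (omega0 ^ b * n + r) ♯ (omega0 ^ b * m + z') := heq.symm
          _ < (omega0 ^ b * n + r) ♯ (omega0 ^ b * m + z) :=
            nadd_lt_nadd_left ((add_lt_add_iff_left _).2 hz') _

theorem nadd_lt_omega0_opow {c x y : Ordinal}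
    (hx : x < omega0 ^ c) (hy : y < omega0 ^ c) : x ♯ y < omega0 ^ c := by
  induction c using Ordinal.induction generalizing x y with
  | _ c IH =>
  rcases Ordinal.zero_or_succ_or_isSuccLimit c with rfl | ⟨b, rfl⟩ | hc
  · rw [opow_zero] at *
    rw [lt_one_iff_zero] at hx hy
    subst hx; subst hy
    simp
  · have hb : ∀ u < omega0 ^ b, ∀ v < omega0 ^ b, u ♯ v < omega0 ^ b :=
      fun u hu v hv => IH b (lt_succ b) hu hv
    rw [opow_succ] at hx hy ⊢
    obtain ⟨nx, hnx, hxlt⟩ := (lt_mul_iff_of_isSuccLimit isSuccLimit_omega0).1 hx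
    obtain ⟨ny, hny, hylt⟩ := (lt_mul_iff_of_isSuccLimit isSuccLimit_omega0).1 hy
    obtain ⟨n, rfl⟩ := lt_omega0.1 hnx
    obtain ⟨m, rfl⟩ := lt_omega0.1 hny
    have key := nadd_omega0_opow_aux hb (n + m) n m 0 0 rfl
      (opow_pos _ omega0_pos) (opow_pos _ omega0_pos)
    simp only [add_zero, nadd_zero] at key
    calc x ♯ y < (omega0 ^ b * n) ♯ (omega0 ^ b * m) := nadd_lt_nadd hxlt hylt
      _ = omega0 ^ b * (n + m : ℕ) := key
      _ < omega0 ^ b * omega0 := by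
          apply mul_lt_mul_of_pos_left (nat_lt_omega0 _) (opow_pos _ omega0_pos)
  · obtain ⟨cx, hcx, hx'⟩ := (lt_opow_of_isSuccLimit omega0_ne_zero hc).1 hx
    obtain ⟨cy, hcy, hy'⟩ := (lt_opow_of_isSuccLimit omega0_ne_zero hc).1 hy
    have hmax : max cx cy < c := max_lt hcx hcy
    have := IH _ hmax (hx'.trans_le (opow_le_opow_right omega0_pos (le_max_left _ _)))
      (hy'.trans_le (opow_le_opow_right omega0_pos (le_max_right _ _)))
    exact this.trans_le (opow_le_opow_right omega0_pos hmax.le)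

/-! ### Weighted commutative sums of lists of ordinals -/

noncomputable def wsum (l : List Ordinal) : Ordinal :=
  l.foldr (fun a acc => omega0 ^ (a + 1) ♯ acc) 0

@[simp] theorem wsum_nil : wsum [] = 0 := rfl

@[simp] theorem wsum_cons (a : Ordinal) (l : List Ordinal) :
    wsum (a :: l) = omega0 ^ (a + 1) ♯ wsum l := rfl

theorem wsum_append (l₁ l₂ : List Ordinal) :
    wsum (l₁ ++ l₂) = wsum l₁ ♯ wsum l₂ := by
  induction l₁ with
  | nil => simp [zero_nadd]
  | cons a l ih => simp [ih, nadd_assoc]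

theorem le_wsum {a : Ordinal} {l : List Ordinal} (h : a ∈ l) :
    omega0 ^ (a + 1) ≤ wsum l := by
  induction l with
  | nil => simp at h
  | cons b l ih =>
    rcases List.mem_cons.1 h with rfl | h
    · exact le_self_nadd
    · exact le_trans (ih h) le_nadd_self

theorem wsum_lt_opow {l : List Ordinal} {c : Ordinal}
    (h : ∀ a ∈ l, a + 1 < c) : wsum l < omega0 ^ c := by
  induction l with
  | nil => simpa using opow_pos c omega0_pos
  | cons a l ih =>
    rw [wsum_cons]
    exact nadd_lt_omega0_opow
      ((opow_lt_opow_iff_right one_lt_omega0).2 (h a List.mem_cons_self))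
      (ih fun b hb => h b (List.mem_cons_of_mem _ hb))

theorem nadd_lt_veb {ρ x u v : Ordinal} (hu : u < veb (1 + ρ) x) (hv : v < veb (1 + ρ) x) :
    u ♯ v < veb (1 + ρ) x := by
  rw [← opow_veb ρ x] at hu hv ⊢
  exact nadd_lt_omega0_opow hu hv

theorem wsum_lt_veb {ρ x : Ordinal} {l : List Ordinal}
    (h : ∀ a ∈ l, a < veb (1 + ρ) x) : wsum l < veb (1 + ρ) x := by
  induction l with
  | nil => simpa using veb_pos ρ x
  | cons a l ih =>
    rw [wsum_cons]
    exact nadd_lt_veb (opow_lt_veb (succ_lt_veb (h a List.mem_cons_self)))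
      (ih fun b hb => h b (List.mem_cons_of_mem _ hb))

theorem nadd_shuffle (e u P Q : Ordinal) :
    e ♯ (P ♯ (u ♯ Q)) = (e ♯ u) ♯ (P ♯ Q) := by
  rw [nadd_assoc, nadd_left_comm u P Q]

/-! ### The interpretation of terms -/

variable {σ X : Type}

def hbase : σ ⊕ σ × ℕ → σ := Sum.elim id Prod.fst

noncomputable def hen : σ ⊕ σ × ℕ → Ordinal :=
  Sum.elim (fun _ => omega0) (fun p => (p.2 : Ordinal))

@[simp] theorem hbase_inl (f : σ) : hbase (Sum.inl f) = f := rfl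
@[simp] theorem hbase_inr (f : σ) (n : ℕ) : hbase (Sum.inr (f, n)) = f := rfl
@[simp] theorem hen_inl (f : σ) : hen (Sum.inl f : σ ⊕ σ × ℕ) = omega0 := rfl
@[simp] theorem hen_inr (f : σ) (n : ℕ) :
    hen (Sum.inr (f, n) : σ ⊕ σ × ℕ) = (n : Ordinal) := rfl

noncomputable def mes (rk : σ → Ordinal) : Term (σ ⊕ σ × ℕ) X → Ordinal
  | .var _ => 0
  | .app h ts => veb (1 + rk (hbase h))
      (hen h ♯ wsum (ts.attach.map fun ⟨t, _⟩ => mes rk t))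
decreasing_by
  have := List.sizeOf_lt_of_mem ‹_ ∈ ts›
  simp only [Term.app.sizeOf_spec]
  omega

theorem mes_app (rk : σ → Ordinal) (h : σ ⊕ σ × ℕ) (ts : List (Term (σ ⊕ σ × ℕ) X)) :
    mes rk (.app h ts) = veb (1 + rk (hbase h)) (hen h ♯ wsum (ts.map (mes rk))) := by
  rw [mes]
  congr 2
  simp

/-! ### The measure strictly decreases along `Star^ω` root steps -/

theorem mes_lt_of_root {lt : σ → σ → Prop} (rk : σ → Ordinal)
    (hrk : ∀ {g f : σ}, lt g f → rk g < rk f) {s t : Term (σ ⊕ σ × ℕ) X}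
    (h : StarOmegaRoot lt s t) : mes rk t < mes rk s := by
  cases h with
  | put f n ts =>
    rw [mes_app, mes_app]
    simp only [hbase_inl, hbase_inr, hen_inl, hen_inr]
    exact veb_lt (nadd_lt_nadd_right (nat_lt_omega0 n) _)
  | select f n xs y zs =>
    rw [mes_app]
    simp only [hbase_inr, hen_inr]
    have hmem : mes rk t ∈ (xs ++ t :: zs).map (mes rk) :=
      List.mem_map_of_mem (List.mem_append_right _ List.mem_cons_self)
    calc mes rk t ≤ omega0 ^ (mes rk t) := right_le_opow _ one_lt_omega0
      _ < omega0 ^ (mes rk t + 1) := by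
          rw [Ordinal.add_one_eq_succ]
          exact (opow_lt_opow_iff_right one_lt_omega0).2 (lt_succ _)
      _ ≤ wsum ((xs ++ t :: zs).map (mes rk)) := le_wsum hmem
      _ ≤ ((n + 1 : ℕ) : Ordinal) ♯ wsum ((xs ++ t :: zs).map (mes rk)) := le_nadd_self
      _ ≤ _ := le_veb _ _
  | copy f g n k ts hgf =>
    rw [mes_app, mes_app]
    simp only [hbase_inl, hbase_inr, hen_inl, hen_inr]
    apply veb_collapse (hrk hgf)
    have hu : mes rk (Term.app (Sum.inr (f, n)) ts) <
        veb (1 + rk f) (((n + 1 : ℕ) : Ordinal) ♯ wsum (ts.map (mes rk))) := by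
      rw [mes_app]
      simp only [hbase_inr, hen_inr]
      exact veb_lt (nadd_lt_nadd_right (by exact_mod_cast n.lt_succ_self) _)
    apply nadd_lt_veb (omega0_lt_veb _ _)
    apply wsum_lt_veb
    intro a ha
    rw [List.map_replicate] at ha
    rw [List.eq_of_mem_replicate ha]
    exact hu
  | down f g n k xs ys zs =>
    rw [mes_app, mes_app]
    simp only [hbase_inl, hbase_inr, hen_inl, hen_inr]
    apply veb_lt
    simp only [List.map_append, List.map_cons, wsum_append, wsum_cons, List.map_replicate]
    have hma_pos : 0 < mes rk (Term.app (Sum.inl g) ys) := by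
      rw [mes_app]; exact veb_pos _ _
    have hba : mes rk (Term.app (Sum.inr (g, n)) ys) < mes rk (Term.app (Sum.inl g) ys) := by
      rw [mes_app, mes_app]
      simp only [hbase_inl, hbase_inr, hen_inl, hen_inr]
      exact veb_lt (nadd_lt_nadd_right (nat_lt_omega0 n) _)
    have hR : omega0 ♯ wsum (List.replicate k (mes rk (Term.app (Sum.inr (g, n)) ys))) <
        omega0 ^ (mes rk (Term.app (Sum.inl g) ys) + 1) := by
      apply nadd_lt_omega0_opow
      · calc omega0 = omega0 ^ (1 : Ordinal) := (opow_one _).symm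
          _ < omega0 ^ (mes rk (Term.app (Sum.inl g) ys) + 1) := by
              apply (opow_lt_opow_iff_right one_lt_omega0).2
              rw [Ordinal.add_one_eq_succ]
              exact (Order.one_le_iff_pos.2 hma_pos).trans_lt (lt_succ _)
      · apply wsum_lt_opow
        intro a ha
        rw [List.eq_of_mem_replicate ha]
        rw [Ordinal.add_one_eq_succ, Ordinal.add_one_eq_succ]
        exact succ_lt_succ hba
    calc omega0 ♯ (wsum (xs.map (mes rk)) ♯
            wsum (List.replicate k (mes rk (Term.app (Sum.inr (g, n)) ys))) ♯
              wsum (zs.map (mes rk)))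
        = omega0 ♯ (wsum (xs.map (mes rk)) ♯
            (wsum (List.replicate k (mes rk (Term.app (Sum.inr (g, n)) ys))) ♯
              wsum (zs.map (mes rk)))) := by rw [nadd_assoc]
      _ = (omega0 ♯ wsum (List.replicate k (mes rk (Term.app (Sum.inr (g, n)) ys)))) ♯
            (wsum (xs.map (mes rk)) ♯ wsum (zs.map (mes rk))) := nadd_shuffle _ _ _ _
      _ < (((n + 1 : ℕ) : Ordinal) ♯ omega0 ^ (mes rk (Term.app (Sum.inl g) ys) + 1)) ♯
            (wsum (xs.map (mes rk)) ♯ wsum (zs.map (mes rk))) :=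
          nadd_lt_nadd_right (lt_of_lt_of_le hR le_nadd_self) _
      _ = ((n + 1 : ℕ) : Ordinal) ♯ (wsum (xs.map (mes rk)) ♯
            (omega0 ^ (mes rk (Term.app (Sum.inl g) ys) + 1) ♯ wsum (zs.map (mes rk)))) :=
          (nadd_shuffle _ _ _ _).symm

theorem mes_lt_of_starOmega {lt : σ → σ → Prop} (rk : σ → Ordinal)
    (hrk : ∀ {g f : σ}, lt g f → rk g < rk f) {s t : Term (σ ⊕ σ × ℕ) X}
    (h : Rewrite (StarOmegaRoot lt) s t) : mes rk t < mes rk s := by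
  induction h with
  | root hr => exact mes_lt_of_root rk hrk hr
  | @congr s t f pre post _ ih =>
    rw [mes_app, mes_app]
    apply veb_lt
    simp only [List.map_append, List.map_cons, wsum_append, wsum_cons]
    rw [nadd_shuffle (hen f) (omega0 ^ (mes rk t + 1)),
        nadd_shuffle (hen f) (omega0 ^ (mes rk s + 1))]
    apply nadd_lt_nadd_right
    apply nadd_lt_nadd_left
    apply (opow_lt_opow_iff_right one_lt_omega0).2
    rw [Ordinal.add_one_eq_succ, Ordinal.add_one_eq_succ]
    exact succ_lt_succ ih

/-! ### The measure is invariant under argument permutation -/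

theorem mes_eq_of_swapStep (rk : σ → Ordinal) {s t : Term (σ ⊕ σ × ℕ) X}
    (h : SwapStep s t) : mes rk s = mes rk t := by
  induction h with
  | root hr =>
    cases hr with
    | swap f us x y ws =>
      rw [mes_app, mes_app]
      congr 1
      simp only [List.map_append, List.map_cons, wsum_append, wsum_cons]
      rw [nadd_left_comm (omega0 ^ (mes rk x + 1)) (omega0 ^ (mes rk y + 1))]
  | @congr s t f pre post _ ih =>
    rw [mes_app, mes_app]
    simp only [List.map_append, List.map_cons, wsum_append, wsum_cons, ih]

theorem mes_eq_of_equiv (rk : σ → Ordinal) {s t : Term (σ ⊕ σ × ℕ) X}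
    (h : TermEquiv s t) : mes rk s = mes rk t := by
  induction h with
  | rel _ _ h => exact mes_eq_of_swapStep rk h
  | refl => rfl
  | symm _ _ _ ih => exact ih.symm
  | trans _ _ _ _ _ ih₁ ih₂ => exact ih₁.trans ih₂
end Aux
/-- Let `(Σ, <)` be a well-founded partial order.  The energized star relation
`▷▷` is strongly normalizing on all trees over `Σ ∪ Σ^ω`: there is no infinite
sequence `t₀ ▷▷ t₁ ▷▷ t₂ ▷▷ ⋯`. -/
theorem starOmega_sn
    {σ X : Type} [Countable X] [Infinite X]
    (lt : σ → σ → Prop) (hirr : Irreflexive lt) (htrans : Transitive lt)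
    (hwf : WellFounded lt) :
    ¬ ∃ f : ℕ → Tree (σ ⊕ σ × ℕ) X,
        ∀ n : ℕ, TreeRel (StarOmegaRoot lt) (f n) (f (n + 1)) := by
  rintro ⟨f, hf⟩
  let rk : σ → Ordinal := fun a => (hwf.apply a).rank
  have hrk : ∀ {g f' : σ}, lt g f' → rk g < rk f' := by
    intro g f' h
    exact Acc.rank_lt_of_rel (hwf.apply f') h
  let g : Tree (σ ⊕ σ × ℕ) X → Ordinal :=
    Quotient.lift (mes rk) (fun a b hab => mes_eq_of_equiv rk hab)
  have hdec : ∀ n, g (f (n + 1)) < g (f n) := by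
    intro n
    obtain ⟨s, t, hs, ht, hrw⟩ := hf n
    have h1 : g (f n) = mes rk s := by rw [hs]; rfl
    have h2 : g (f (n + 1)) = mes rk t := by rw [ht]; rfl
    rw [h1, h2]
    exact mes_lt_of_starOmega rk hrk hrw
  have hne : (Set.range fun n => g (f n)).Nonempty := ⟨g (f 0), 0, rfl⟩
  obtain ⟨n0, hn0⟩ := Ordinal.lt_wf.min_mem (Set.range fun n => g (f n)) hne
  exact Ordinal.lt_wf.not_lt_min (Set.range fun n => g (f n))
    ⟨n0 + 1, rfl⟩ (hn0 ▸ hdec n0)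

end StarGames
end

section
/- The Kirby–Paris Hydra relation is simulated by the star game: →_KP ⊆ ▷+, where ▷ is the Star rewrite relation over the signature {0, †} (with the empty precedence, so no copy steps are needed). In particular, every →_KP step from a KP Hydra s to a KP Hydra t admits a nonempty ▷ reduction from s to t. -/
namespace StarGames

variable {σ X : Type}

/-- Root steps of the TRS `Star` over `Σ ∪ Σ⋆`.
`Sum.inl f` is the plain symbol `f`, `Sum.inr f` is the marked symbol `f⋆`.
`lt a b` means `a < b` in the precedence. -/
inductive StarRoot (lt : σ → σ → Prop) : Term (σ ⊕ σ) X → Term (σ ⊕ σ) X → Prop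
  | put (f : σ) (ts : List (Term (σ ⊕ σ) X)) :
      StarRoot lt (.app (.inl f) ts) (.app (.inr f) ts)
  | select (f : σ) (xs : List (Term (σ ⊕ σ) X)) (y : Term (σ ⊕ σ) X)
      (zs : List (Term (σ ⊕ σ) X)) :
      StarRoot lt (.app (.inr f) (xs ++ y :: zs)) y
  | copy (f g : σ) (k : ℕ) (ts : List (Term (σ ⊕ σ) X)) :
      lt g f →
      StarRoot lt (.app (.inr f) ts)
        (.app (.inl g) (List.replicate k (Term.app (.inr f) ts)))
  | down (f g : σ) (k : ℕ) (xs ys zs : List (Term (σ ⊕ σ) X)) :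
      StarRoot lt (.app (.inr f) (xs ++ Term.app (.inl g) ys :: zs))
        (.app (.inl f) (xs ++ List.replicate k (Term.app (.inr g) ys) ++ zs))

/-- `▷` on terms over `Σ ∪ Σ⋆`. -/
def StarStep (lt : σ → σ → Prop) : Term (σ ⊕ σ) X → Term (σ ⊕ σ) X → Prop :=
  Rewrite (StarRoot lt)

/-- `▷` on trees over `Σ ∪ Σ⋆`. -/
def StarTree (lt : σ → σ → Prop) : Tree (σ ⊕ σ) X → Tree (σ ⊕ σ) X → Prop :=
  TreeRel (StarRoot lt)

/-- A symbol of `Σ ∪ Σ⋆` is unmarked if it belongs to `Σ`. -/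
def Unstarred : σ ⊕ σ → Prop := fun s => ∃ f : σ, s = Sum.inl f

/-- A term is star-free if it contains no marked symbol. -/
def StarFreeTerm : Term (σ ⊕ σ) X → Prop := Uses Unstarred

/-- A tree is star-free if it contains no marked symbol. -/
def StarFreeTree (T : Tree (σ ⊕ σ) X) : Prop :=
  ∃ t : Term (σ ⊕ σ) X, T = Tree.mk t ∧ StarFreeTerm t

end StarGames

namespace StarGames

/-- The Kirby–Paris signature `{0, †}`. -/
inductive KP : Type
  | zero : KP
  | dagger : KP

/-- Root steps of the Kirby–Paris Hydra TRS.
`kp1`: `†(t⃗, 0) → †(t⃗)` removes a leaf labeled `0` directly below the root.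
`kp2`: `f(t⃗₁, 0(t⃗₂, 0)) → f(t⃗₁, 0(t⃗₂), …, 0(t⃗₂))` (`k ≥ 0` copies). -/
inductive KPRoot : Term KP Empty → Term KP Empty → Prop
  | kp1 (ts : List (Term KP Empty)) :
      KPRoot (.app KP.dagger (ts ++ [Term.app KP.zero []]))
             (.app KP.dagger ts)
  | kp2 (f : KP) (ts1 ts2 : List (Term KP Empty)) (k : ℕ) :
      KPRoot (.app f (ts1 ++ [Term.app KP.zero (ts2 ++ [Term.app KP.zero []])]))
             (.app f (ts1 ++ List.replicate k (Term.app KP.zero ts2)))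

/-- All nodes are labeled `0`. -/
def OnlyZeros : Term KP Empty → Prop := Uses (fun s : KP => s = KP.zero)

/-- A Kirby–Paris Hydra (as a term): a finite tree with labels in `{0, †}`
in which `†` labels only the root. -/
def IsKPHydraTerm : Term KP Empty → Prop
  | Term.var x => x.elim
  | Term.app _ ts => ∀ t ∈ ts, OnlyZeros t

/-- A Kirby–Paris Hydra (as an unordered tree). -/
def IsKPHydraTree (T : Tree KP Empty) : Prop :=
  ∃ t : Term KP Empty, T = Tree.mk t ∧ IsKPHydraTerm t

end StarGames

namespace StarGames

section Aux

variable {σ σ' X : Type}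

theorem Term.relabel_app (h : σ → σ') (f : σ) (ts : List (Term σ X)) :
    Term.relabel h (.app f ts) = .app (h f) (ts.map (Term.relabel h)) := by
  rw [Term.relabel]
  congr 1
  simp

theorem SwapStep.relabel (h : σ → σ') {s t : Term σ X} (hs : SwapStep s t) :
    SwapStep (s.relabel h) (t.relabel h) := by
  induction hs with
  | root r =>
    cases r with
    | swap f us x y ws =>
      refine Rewrite.root ?_
      simp only [Term.relabel_app, List.map_append, List.map_cons]
      exact SwapRoot.swap _ _ _ _ _
  | congr f pre post _ ih =>
    simp only [Term.relabel_app, List.map_append, List.map_cons]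
    exact Rewrite.congr _ _ _ ih

theorem TermEquiv.relabel (h : σ → σ') {s t : Term σ X} (he : TermEquiv s t) :
    TermEquiv (s.relabel h) (t.relabel h) := by
  induction he with
  | rel _ _ hst => exact Relation.EqvGen.rel _ _ (hst.relabel h)
  | refl _ => exact Relation.EqvGen.refl _
  | symm _ _ _ ih => exact Relation.EqvGen.symm _ _ ih
  | trans _ _ _ _ _ ih1 ih2 => exact Relation.EqvGen.trans _ _ _ ih1 ih2

theorem transGen_rewrite_congr {R : Term σ X → Term σ X → Prop} {s t : Term σ X}
    (f : σ) (pre post : List (Term σ X))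
    (h : Relation.TransGen (Rewrite R) s t) :
    Relation.TransGen (Rewrite R)
      (.app f (pre ++ s :: post)) (.app f (pre ++ t :: post)) :=
  Relation.TransGen.lift (fun u => Term.app f (pre ++ u :: post))
    (fun _ _ hr => Rewrite.congr f pre post hr) _ _ h

theorem transGen_star_tree {lt : σ → σ → Prop} {s t : Term (σ ⊕ σ) X}
    (h : Relation.TransGen (StarStep lt) s t) :
    Relation.TransGen (StarTree lt) (Tree.mk s) (Tree.mk t) :=
  Relation.TransGen.lift Tree.mk (fun a b hab => ⟨a, b, rfl, rfl, hab⟩) _ _ h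

theorem copies_step {lt : σ → σ → Prop} (f : σ) {u v : Term (σ ⊕ σ) X}
    (hr : StarRoot lt u v) (pre : List (Term (σ ⊕ σ) X)) (k : ℕ) :
    Relation.ReflTransGen (StarStep lt)
      (.app (.inl f) (pre ++ List.replicate k u))
      (.app (.inl f) (pre ++ List.replicate k v)) := by
  induction k generalizing pre with
  | zero => exact .refl
  | succ k ih =>
    rw [List.replicate_succ, List.replicate_succ]
    refine Relation.ReflTransGen.head
      (show StarStep lt _ _ from
        Rewrite.congr (Sum.inl f) pre (List.replicate k u) (Rewrite.root hr)) ?_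
    have := ih (pre ++ [v])
    rw [List.append_assoc, List.append_assoc] at this
    simpa using this

theorem kp_root_sim {s t : Term KP Empty} (h : KPRoot s t) :
    Relation.TransGen (StarStep (fun _ _ : KP => False))
      (s.relabel Sum.inl) (t.relabel Sum.inl) := by
  cases h with
  | kp1 ts =>
    simp only [Term.relabel_app, List.map_append, List.map_cons, List.map_nil]
    refine Relation.TransGen.head (Rewrite.root (StarRoot.put KP.dagger _)) ?_
    refine Relation.TransGen.single ?_
    have := Rewrite.root (X := Empty)
      (StarRoot.down (lt := fun _ _ : KP => False) KP.dagger KP.zero 0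
        (ts.map (Term.relabel Sum.inl)) [] [])
    simpa [StarStep] using this
  | kp2 f ts1 ts2 k =>
    simp only [Term.relabel_app, List.map_append, List.map_cons, List.map_nil,
      List.map_replicate]
    set A := ts1.map (Term.relabel Sum.inl) with hA
    set B := ts2.map (Term.relabel Sum.inl) with hB
    refine Relation.TransGen.trans_left
      (Relation.TransGen.head (Rewrite.root (StarRoot.put f _))
        (Relation.TransGen.single (Rewrite.root
          (StarRoot.down (lt := fun _ _ : KP => False) f KP.zero k A
            (B ++ [Term.app (Sum.inl KP.zero) []]) [])))) ?_
    rw [List.append_nil]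
    have hcopy := copies_step (lt := fun _ _ : KP => False) f
      (StarRoot.down KP.zero KP.zero 0 B [] []) A k
    simpa using hcopy

theorem kp_rewrite_sim {s t : Term KP Empty} (h : Rewrite KPRoot s t) :
    Relation.TransGen (StarStep (fun _ _ : KP => False))
      (s.relabel Sum.inl) (t.relabel Sum.inl) := by
  induction h with
  | root hr => exact kp_root_sim hr
  | congr f pre post _ ih =>
    simp only [Term.relabel_app, List.map_append, List.map_cons]
    exact transGen_rewrite_congr _ _ _ ih

end Aux

/-- The Kirby–Paris Hydra relation is simulated by the star game: `→_KP ⊆ ▷⁺`,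
where `▷` is the `Star` rewrite relation over the signature `{0, †}` with the
empty precedence.  (Trees over `{0, †}` are injected into trees over
`{0, †} ∪ {0⋆, †⋆}` via `Sum.inl`.) -/
theorem kp_simulated_by_star (s t : Term KP Empty)
    (h : TreeRel KPRoot (Tree.mk s) (Tree.mk t)) :
    Relation.TransGen (StarTree (fun _ _ : KP => False))
      (Tree.mk (s.relabel Sum.inl)) (Tree.mk (t.relabel Sum.inl)) := by
  obtain ⟨s', t', hs, ht, hr⟩ := h
  have hse : TermEquiv s s' := Quotient.exact hs
  have hte : TermEquiv t t' := Quotient.exact ht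
  have hs' : Tree.mk (s.relabel (Sum.inl : KP → KP ⊕ KP)) = Tree.mk (s'.relabel Sum.inl) :=
    Quotient.sound (hse.relabel Sum.inl)
  have ht' : Tree.mk (t.relabel (Sum.inl : KP → KP ⊕ KP)) = Tree.mk (t'.relabel Sum.inl) :=
    Quotient.sound (hte.relabel Sum.inl)
  rw [hs', ht']
  exact transGen_star_tree (kp_rewrite_sim hr)

end StarGames
end

section
/- Let (S, <) be a well-founded partial order, S' = S ∪ {⊥} with ⊥ a fresh least element, and g ≥ 1. If s is a tree labeled over S and s →_chop · →_propagate^! t, then there exists a tree v labeled over S' such that s ▷ s⋆ ▷* v ↪_g* t, where s⋆ denotes s with its root symbol marked (a root put step) and ▷ is the Star relation over S'. -/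
namespace StarGames

/-- Markings for the Star Hydra setting: plain symbols `s`, underlined symbols
`s̲`, and starred symbols `s⋆`. -/
inductive Mark3 : Type
  | plain : Mark3
  | ul : Mark3
  | star : Mark3

variable {S : Type}

/-- The label set `S' = S ∪ {⊥}`: `some a` is `a ∈ S`, `none` is the fresh
element `⊥` below all elements of `S`. -/
abbrev SBot (S : Type) : Type := Option S

/-- The well-founded order on `S' = S ∪ {⊥}` extending `<` by `⊥` below all
elements of `S`. -/
def ltBot (lt : S → S → Prop) : SBot S → SBot S → Prop
  | none, some _ => True
  | some a, some b => lt a b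
  | _, _ => False

/-- The Star Hydra signature: symbols of `S'`, possibly underlined or starred. -/
abbrev HSig (S : Type) : Type := SBot S × Mark3

/-- Root steps of the TRS `Star` over `S'` (with its marked copies). -/
inductive StarHRoot (lt : S → S → Prop) : Term (HSig S) Empty → Term (HSig S) Empty → Prop
  | put (f : SBot S) (ts : List (Term (HSig S) Empty)) :
      StarHRoot lt (.app (f, Mark3.plain) ts) (.app (f, Mark3.star) ts)
  | select (f : SBot S) (xs : List (Term (HSig S) Empty)) (y : Term (HSig S) Empty)
      (zs : List (Term (HSig S) Empty)) :
      StarHRoot lt (.app (f, Mark3.star) (xs ++ y :: zs)) y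
  | copy (f g : SBot S) (k : ℕ) (ts : List (Term (HSig S) Empty)) :
      ltBot lt g f →
      StarHRoot lt (.app (f, Mark3.star) ts)
        (.app (g, Mark3.plain) (List.replicate k (Term.app (f, Mark3.star) ts)))
  | down (f g : SBot S) (k : ℕ) (xs ys zs : List (Term (HSig S) Empty)) :
      StarHRoot lt (.app (f, Mark3.star) (xs ++ Term.app (g, Mark3.plain) ys :: zs))
        (.app (f, Mark3.plain)
          (xs ++ List.replicate k (Term.app (g, Mark3.star) ys) ++ zs))

/-- Root steps of the garbage-collection relation `↪_g`:
`n(x⃗, y₁, …, y_h) ↪_g n̲(x⃗)` for every `h ≥ g`. -/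
inductive GRoot (g : ℕ) : Term (HSig S) Empty → Term (HSig S) Empty → Prop
  | gc (n : SBot S) (xs ys : List (Term (HSig S) Empty)) :
      g ≤ ys.length →
      GRoot g (.app (n, Mark3.plain) (xs ++ ys)) (.app (n, Mark3.ul) xs)

/-- Remove underlining from a mark. -/
def Mark3.dropUL : Mark3 → Mark3
  | Mark3.ul => Mark3.plain
  | m => m

/-- `[t]`: the term `t` with all underlining removed. -/
def dropUnderline (t : Term (HSig S) Empty) : Term (HSig S) Empty :=
  t.relabel (fun a : HSig S => (a.1, a.2.dropUL))

/-- A tree labeled over `S'`: no underlined and no marked (starred) symbols. -/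
def PlainTerm : Term (HSig S) Empty → Prop :=
  Uses (fun a : HSig S => a.2 = Mark3.plain)

/-- A tree labeled over `S`: plain marks and no occurrence of `⊥`. -/
def SPlainTerm : Term (HSig S) Empty → Prop :=
  Uses (fun a : HSig S => a.2 = Mark3.plain ∧ a.1 ≠ none)

/-- `R^!`: a maximal `R`-reduction, i.e. `x R* y` with `y` an `R`-normal form. -/
def MaxRed {α : Type*} (R : α → α → Prop) (a b : α) : Prop :=
  Relation.ReflTransGen R a b ∧ ∀ c : α, ¬ R b c

/-- `s⋆`: the term `s` with its root symbol marked. -/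
def rootStar : Term (HSig S) Empty → Term (HSig S) Empty
  | Term.var x => Term.var x
  | Term.app a ts => Term.app (a.1, Mark3.star) ts

/-- Root steps of the Star Hydra rule (chop):
`n(α, x⃗) → n̲(β̲₁, …, β̲ₖ, x⃗)` for `k ≥ 0` and `β₁, …, βₖ < α`, where `α`
labels a leaf. -/
inductive ChopRoot (lt : S → S → Prop) : Term (HSig S) Empty → Term (HSig S) Empty → Prop
  | chop (n α : SBot S) (βs : List (SBot S)) (xs : List (Term (HSig S) Empty)) :
      (∀ β ∈ βs, ltBot lt β α) →
      ChopRoot lt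
        (.app (n, Mark3.plain) (Term.app (α, Mark3.plain) [] :: xs))
        (.app (n, Mark3.ul)
          ((βs.map fun β => Term.app (β, Mark3.ul) ([] : List (Term (HSig S) Empty))) ++ xs))

/-- Root steps of the Star Hydra rule (propagate):
`n(m̲(x⃗), y⃗) → n̲(m̲(x⃗), y⃗)`. -/
inductive PropagateRoot : Term (HSig S) Empty → Term (HSig S) Empty → Prop
  | propagate (n m : SBot S) (xs ys : List (Term (HSig S) Empty)) :
      PropagateRoot
        (.app (n, Mark3.plain) (Term.app (m, Mark3.ul) xs :: ys))
        (.app (n, Mark3.ul) (Term.app (m, Mark3.ul) xs :: ys))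

/-- Root steps of the Star Hydra rule (widen):
`n̲(m̲(x⃗), y⃗) → n̲(m̲(x⃗), …, m̲(x⃗), y⃗)` with `0` or more copies. -/
inductive WidenRoot : Term (HSig S) Empty → Term (HSig S) Empty → Prop
  | widen (n m : SBot S) (k : ℕ) (xs ys : List (Term (HSig S) Empty)) :
      WidenRoot
        (.app (n, Mark3.ul) (Term.app (m, Mark3.ul) xs :: ys))
        (.app (n, Mark3.ul) (List.replicate k (Term.app (m, Mark3.ul) xs) ++ ys))

/-- Root steps of the Star Hydra rule (lengthen):
`n̲(x⃗) → m̲(n̲(x⃗))` provided `m < n`. -/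
inductive LengthenRoot (lt : S → S → Prop) : Term (HSig S) Empty → Term (HSig S) Empty → Prop
  | lengthen (n m : SBot S) (xs : List (Term (HSig S) Empty)) :
      ltBot lt m n →
      LengthenRoot lt
        (.app (n, Mark3.ul) xs)
        (.app (m, Mark3.ul) [Term.app (n, Mark3.ul) xs])

/-- Root steps of the Star Hydra rule (waive): `m̲(x⃗) → m(x⃗)`. -/
inductive WaiveRoot : Term (HSig S) Empty → Term (HSig S) Empty → Prop
  | waive (m : SBot S) (xs : List (Term (HSig S) Empty)) :
      WaiveRoot (.app (m, Mark3.ul) xs) (.app (m, Mark3.plain) xs)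

/-- The Star Hydra rewrite relation
`→_SH = →_chop · →_propagate^! · (→_widen ∪ →_lengthen)* · →_waive^!` on trees. -/
def SHRel (lt : S → S → Prop) : Tree (HSig S) Empty → Tree (HSig S) Empty → Prop :=
  fun a b =>
    ∃ c d e : Tree (HSig S) Empty,
      TreeRel (ChopRoot lt) a c ∧
      MaxRed (TreeRel PropagateRoot) c d ∧
      Relation.ReflTransGen
        (fun x y => TreeRel WidenRoot x y ∨ TreeRel (LengthenRoot lt) x y) d e ∧
      MaxRed (TreeRel WaiveRoot) e b

end StarGames

namespace StarGames

variable {σ σ' X : Type} {S : Type}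

/-! ### Generic helpers -/

theorem Term.my_ind {motive : Term σ X → Prop} (hv : ∀ x, motive (.var x))
    (ha : ∀ f ts, (∀ t ∈ ts, motive t) → motive (.app f ts)) : ∀ t, motive t
  | .var x => hv x
  | .app f ts => ha f ts (fun t ht => Term.my_ind hv ha t)
decreasing_by
  have := List.sizeOf_lt_of_mem ht
  simp only [Term.app.sizeOf_spec]
  omega

theorem attach_any (l : List α) (f : α → Bool) : (l.attach.any fun x => f x.1) = l.any f := by
  rw [Bool.eq_iff_iff]
  simp only [List.any_eq_true]
  exact ⟨fun ⟨x, _, h⟩ => ⟨x.1, x.2, h⟩, fun ⟨x, hx, h⟩ => ⟨⟨x, hx⟩, List.mem_attach _ _, h⟩⟩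

theorem attach_map (l : List α) (f : α → β) : (l.attach.map fun x => f x.1) = l.map f :=
  List.attach_map_val (l := l) (f := f)

theorem uses_app {p : σ → Prop} {f : σ} {ts : List (Term σ X)} :
    Uses p (Term.app f ts) ↔ p f ∧ ∀ t ∈ ts, Uses p t := by
  constructor
  · rintro (_ | ⟨f, ts, hf, hts⟩); exact ⟨hf, hts⟩
  · rintro ⟨hf, hts⟩; exact Uses.app f ts hf hts

theorem uses_mono {p q : σ → Prop} (hpq : ∀ a, p a → q a) {t : Term σ X}
    (h : Uses p t) : Uses q t := by
  induction h with
  | var x => exact Uses.var x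
  | app f ts hf _ ih => exact Uses.app f ts (hpq f hf) ih

/-! ### Swap steps, equivalence, permutations -/

theorem swapRoot_symm {u w : Term σ X} (h : SwapRoot u w) : SwapRoot w u := by
  rcases h with ⟨f, us, x, y, ws⟩; exact SwapRoot.swap f us y x ws

theorem swapStep_symm {u w : Term σ X} (h : SwapStep u w) : SwapStep w u := by
  induction h with
  | root h => exact Rewrite.root (swapRoot_symm h)
  | congr f pre post _ ih => exact Rewrite.congr f pre post ih

theorem mem_swap_iff {us ws : List (Term σ X)} {x y t : Term σ X} :
    t ∈ us ++ x :: y :: ws ↔ t ∈ us ++ y :: x :: ws := by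
  simp only [List.mem_append, List.mem_cons]; tauto

theorem uses_of_swapStep {p : σ → Prop} {u w : Term σ X} (h : SwapStep u w)
    (hu : Uses p u) : Uses p w := by
  induction h with
  | root h =>
    rcases h with ⟨f, us, x, y, ws⟩
    rw [uses_app] at hu ⊢
    exact ⟨hu.1, fun t ht => hu.2 t (mem_swap_iff.mpr ht)⟩
  | congr f pre post h ih =>
    rw [uses_app] at hu ⊢
    refine ⟨hu.1, fun t ht => ?_⟩
    rcases List.mem_append.mp ht with h1 | h1
    · exact hu.2 t (List.mem_append.mpr (Or.inl h1))
    · rcases List.mem_cons.mp h1 with h2 | h2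
      · exact h2 ▸ ih (hu.2 _ (List.mem_append.mpr (Or.inr (List.mem_cons_self))))
      · exact hu.2 t (List.mem_append.mpr (Or.inr (List.mem_cons_of_mem _ h2)))

theorem uses_equiv_iff {p : σ → Prop} {u w : Term σ X} (h : TermEquiv u w) :
    Uses p u ↔ Uses p w := by
  induction h with
  | rel a b hab => exact ⟨uses_of_swapStep hab, uses_of_swapStep (swapStep_symm hab)⟩
  | refl a => exact Iff.rfl
  | symm a b _ ih => exact ih.symm
  | trans a b c _ _ ih1 ih2 => exact ih1.trans ih2

theorem uses_of_equiv {p : σ → Prop} {u w : Term σ X} (h : TermEquiv u w)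
    (hu : Uses p u) : Uses p w := (uses_equiv_iff h).mp hu

theorem equiv_congr {f : σ} {pre post : List (Term σ X)} {u w : Term σ X}
    (h : TermEquiv u w) :
    TermEquiv (Term.app f (pre ++ u :: post)) (Term.app f (pre ++ w :: post)) := by
  induction h with
  | rel a b hab => exact Relation.EqvGen.rel _ _ (Rewrite.congr f pre post hab)
  | refl a => exact Relation.EqvGen.refl _
  | symm a b _ ih => exact Relation.EqvGen.symm _ _ ih
  | trans a b c _ _ ih1 ih2 => exact Relation.EqvGen.trans _ _ _ ih1 ih2

def AdjSwap (l l' : List α) : Prop := ∃ us x y ws, l = us ++ x :: y :: ws ∧ l' = us ++ y :: x :: ws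

theorem perm_rtg_adjSwap {l l' : List α} (h : l.Perm l') :
    Relation.ReflTransGen (AdjSwap (α := α)) l l' := by
  induction h with
  | nil => exact Relation.ReflTransGen.refl
  | cons a h ih =>
    refine Relation.ReflTransGen.lift (a :: ·) ?_ _ _ ih
    rintro x y ⟨us, p, q, ws, h1, h2⟩
    exact ⟨a :: us, p, q, ws, by simp [h1], by simp [h2]⟩
  | swap x y l => exact Relation.ReflTransGen.single ⟨[], y, x, l, rfl, rfl⟩
  | trans _ _ ih1 ih2 => exact ih1.trans ih2

theorem equiv_of_perm {f : σ} {l l' : List (Term σ X)} (h : l.Perm l') :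
    TermEquiv (Term.app f l) (Term.app f l') := by
  have hrtg := perm_rtg_adjSwap h
  clear h
  induction hrtg with
  | refl => exact Relation.EqvGen.refl _
  | tail _ hstep ih =>
    rcases hstep with ⟨us, x, y, ws, h1, h2⟩
    subst h1; subst h2
    exact Relation.EqvGen.trans _ _ _ ih
      (Relation.EqvGen.rel _ _ (Rewrite.root (SwapRoot.swap f us x y ws)))

theorem mk_perm {f : σ} {l l' : List (Term σ X)} (h : l.Perm l') :
    Tree.mk (Term.app f l) = Tree.mk (Term.app f l') :=
  Quotient.sound (equiv_of_perm h)

/-! ### Lifting rewriting to trees and contexts -/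

theorem treeStep {R : Term σ X → Term σ X → Prop} {s t : Term σ X} (h : Rewrite R s t) :
    TreeRel R (Tree.mk s) (Tree.mk t) := ⟨s, t, rfl, rfl, h⟩

def plug (f : σ) (pre post : List (Term σ X)) : Tree σ X → Tree σ X :=
  @Quotient.map _ _ (treeSetoid σ X) (treeSetoid σ X)
    (fun u => Term.app f (pre ++ u :: post)) (fun _ _ h => equiv_congr h)

theorem plug_mk {f : σ} {pre post : List (Term σ X)} (u : Term σ X) :
    plug f pre post (Tree.mk u) = Tree.mk (Term.app f (pre ++ u :: post)) := rfl

theorem treeRel_plug {R : Term σ X → Term σ X → Prop} {a b : Tree σ X}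
    (f : σ) (pre post : List (Term σ X)) (h : TreeRel R a b) :
    TreeRel R (plug f pre post a) (plug f pre post b) := by
  rcases h with ⟨s, t, ha, hb, hr⟩
  subst ha; subst hb
  exact ⟨_, _, plug_mk s, plug_mk t, Rewrite.congr f pre post hr⟩

theorem rtg_plug {R : Term σ X → Term σ X → Prop} {a b : Tree σ X}
    (f : σ) (pre post : List (Term σ X)) (h : Relation.ReflTransGen (TreeRel R) a b) :
    Relation.ReflTransGen (TreeRel R) (plug f pre post a) (plug f pre post b) :=
  Relation.ReflTransGen.lift _ (fun _ _ h => treeRel_plug f pre post h) _ _ h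

theorem rtg_list {R : Term σ X → Term σ X → Prop} (f : σ) {l l' : List (Term σ X)}
    (h : List.Forall₂ (fun u w => Relation.ReflTransGen (TreeRel R) (Tree.mk u) (Tree.mk w)) l l') :
    ∀ pre : List (Term σ X),
    Relation.ReflTransGen (TreeRel R) (Tree.mk (Term.app f (pre ++ l)))
      (Tree.mk (Term.app f (pre ++ l'))) := by
  induction h with
  | nil => exact fun pre => Relation.ReflTransGen.refl
  | @cons u w lu lw huw _ ih =>
    intro pre
    have s1 : Relation.ReflTransGen (TreeRel R) (Tree.mk (Term.app f (pre ++ u :: lu)))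
        (Tree.mk (Term.app f (pre ++ w :: lu))) := by
      have := rtg_plug f pre lu huw
      rwa [plug_mk, plug_mk] at this
    have s2 := ih (pre ++ [w])
    simp only [List.append_assoc, List.singleton_append] at s2
    exact s1.trans s2

theorem forall₂_replicate {R : α → α → Prop} {x : α} {l : List α} (h : ∀ y ∈ l, R x y) :
    List.Forall₂ R (List.replicate l.length x) l := by
  induction l with
  | nil => exact List.Forall₂.nil
  | cons a l ih =>
    rw [List.length_cons, List.replicate_succ]
    exact List.Forall₂.cons (h a (by simp)) (ih (fun y hy => h y (by simp [hy])))

theorem forall₂_replicate' {R : α → α → Prop} {x y : α} (n : ℕ) (h : R x y) :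
    List.Forall₂ R (List.replicate n x) (List.replicate n y) := by
  induction n with
  | zero => exact List.Forall₂.nil
  | succ n ih => rw [List.replicate_succ, List.replicate_succ]; exact List.Forall₂.cons h ih

theorem forall₂_map_map {R : β → β → Prop} {l : List α} {f g : α → β}
    (h : ∀ a ∈ l, R (f a) (g a)) : List.Forall₂ R (l.map f) (l.map g) := by
  induction l with
  | nil => exact List.Forall₂.nil
  | cons a l ih => exact List.Forall₂.cons (h a (by simp)) (ih fun a ha => h a (by simp [ha]))

theorem forall₂_refl_tree {σ X : Type} {R : Term σ X → Term σ X → Prop} (l : List (Term σ X)) :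
    List.Forall₂ (fun u w => Relation.ReflTransGen (TreeRel R) (Tree.mk u) (Tree.mk w)) l l := by
  induction l with
  | nil => exact List.Forall₂.nil
  | cons a l ih => exact List.Forall₂.cons Relation.ReflTransGen.refl ih

theorem forall₂_refl_of {R : α → α → Prop} (h : ∀ x, R x x) (l : List α) :
    List.Forall₂ R l l := by
  induction l with
  | nil => exact List.Forall₂.nil
  | cons a l ih => exact List.Forall₂.cons (h a) ih

/-! ### `hasUL` and the propagate normal form function -/

def Mark3.isPlainB : Mark3 → Bool
  | Mark3.plain => true
  | _ => false

def Mark3.isULB : Mark3 → Bool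
  | Mark3.ul => true
  | _ => false

def markOf (m : Mark3) (b : Bool) : Mark3 := if m.isPlainB && b then Mark3.ul else m

@[simp] theorem markOf_plain_true : markOf Mark3.plain true = Mark3.ul := rfl
@[simp] theorem markOf_plain_false : markOf Mark3.plain false = Mark3.plain := rfl
@[simp] theorem markOf_ul (b : Bool) : markOf Mark3.ul b = Mark3.ul := by cases b <;> rfl
@[simp] theorem markOf_star (b : Bool) : markOf Mark3.star b = Mark3.star := by cases b <;> rfl
@[simp] theorem markOf_false (m : Mark3) : markOf m false = m := by cases m <;> rfl

def hasUL : Term (HSig S) Empty → Bool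
  | .var _ => false
  | .app a ts => a.2.isULB || ts.attach.any fun ⟨t, _⟩ => hasUL t
decreasing_by
  have := List.sizeOf_lt_of_mem ‹_ ∈ ts›
  simp only [Term.app.sizeOf_spec]
  omega

@[simp] theorem hasUL_app (a : HSig S) (ts : List (Term (HSig S) Empty)) :
    hasUL (Term.app a ts) = (a.2.isULB || ts.any hasUL) := by
  rw [hasUL, attach_any]

def propNF : Term (HSig S) Empty → Term (HSig S) Empty
  | .var x => .var x
  | .app a ts =>
      .app (a.1, markOf a.2 (ts.attach.any fun ⟨t, _⟩ => hasUL t))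
        (ts.attach.map fun ⟨t, _⟩ => propNF t)
decreasing_by
  have := List.sizeOf_lt_of_mem ‹_ ∈ ts›
  simp only [Term.app.sizeOf_spec]
  omega

@[simp] theorem propNF_app (a : HSig S) (ts : List (Term (HSig S) Empty)) :
    propNF (Term.app a ts) = Term.app (a.1, markOf a.2 (ts.any hasUL)) (ts.map propNF) := by
  rw [propNF, attach_any, attach_map]

theorem hasUL_var (x : Empty) : hasUL (S := S) (Term.var x) = false := by rw [hasUL]

theorem propNF_var (x : Empty) : propNF (S := S) (Term.var x) = Term.var x := by rw [propNF]

theorem hasUL_false_of_plain {u : Term (HSig S) Empty}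
    (h : Uses (fun a => a.2 = Mark3.plain) u) : hasUL u = false := by
  induction h with
  | var x => exact hasUL_var x
  | app f ts hf hts ih =>
    rw [hasUL_app, hf]
    simp only [Mark3.isULB, Bool.false_or, List.any_eq_false]
    intro t ht
    simp [ih t ht]

theorem propNF_id_of_noUL {u : Term (HSig S) Empty} (h : hasUL u = false) : propNF u = u := by
  induction u using Term.my_ind with
  | hv x => exact propNF_var x
  | ha f ts ih =>
    rw [hasUL_app, Bool.or_eq_false_iff, List.any_eq_false] at h
    rw [propNF_app]
    have hany : ts.any hasUL = false := List.any_eq_false.mpr h.2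
    have hmap : ts.map propNF = ts :=
      (List.map_congr_left fun t ht => ih t ht (by simpa using h.2 t ht)).trans (List.map_id ts)
    rw [hany, markOf_false, hmap]

/-! ### Invariance of `hasUL` and `propNF` under swaps and propagate steps -/

theorem hasUL_swapStep {u w : Term (HSig S) Empty} (h : SwapStep u w) : hasUL u = hasUL w := by
  induction h with
  | root h =>
    rcases h with ⟨f, us, x, y, ws⟩
    simp only [hasUL_app, List.any_append, List.any_cons]
    cases hasUL x <;> cases hasUL y <;> simp
  | congr f pre post _ ih =>
    simp only [hasUL_app, List.any_append, List.any_cons, ih]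

theorem propNF_swapStep {u w : Term (HSig S) Empty} (h : SwapStep u w) :
    SwapStep (propNF u) (propNF w) := by
  induction h with
  | root h =>
    rcases h with ⟨f, us, x, y, ws⟩
    simp only [propNF_app, List.map_append, List.map_cons]
    have : ((us ++ x :: y :: ws).any hasUL) = ((us ++ y :: x :: ws).any hasUL) := by
      simp only [List.any_append, List.any_cons]
      cases hasUL x <;> cases hasUL y <;> simp
    rw [this]
    exact Rewrite.root (SwapRoot.swap _ (us.map propNF) (propNF x) (propNF y) (ws.map propNF))
  | congr f pre post hr ih =>
    have hul : hasUL _ = hasUL _ := hasUL_swapStep hr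
    simp only [propNF_app, List.map_append, List.map_cons, List.any_append, List.any_cons, hul]
    exact Rewrite.congr _ (pre.map propNF) (post.map propNF) ih

theorem propNF_equiv {u w : Term (HSig S) Empty} (h : TermEquiv u w) :
    TermEquiv (propNF u) (propNF w) := by
  induction h with
  | rel a b hab => exact Relation.EqvGen.rel _ _ (propNF_swapStep hab)
  | refl a => exact Relation.EqvGen.refl _
  | symm a b _ ih => exact Relation.EqvGen.symm _ _ ih
  | trans a b c _ _ ih1 ih2 => exact Relation.EqvGen.trans _ _ _ ih1 ih2

theorem hasUL_prop {u w : Term (HSig S) Empty} (h : Rewrite PropagateRoot u w) :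
    hasUL u = true ∧ hasUL w = true ∧ propNF u = propNF w := by
  induction h with
  | root h =>
    rcases h with ⟨n, m, xs, ys⟩
    refine ⟨by simp [Mark3.isULB], by simp [Mark3.isULB], ?_⟩
    simp [Mark3.isULB, Mark3.isPlainB, markOf]
  | congr f pre post hr ih =>
    obtain ⟨h1, h2, h3⟩ := ih
    refine ⟨?_, ?_, ?_⟩
    · simp [h1]
    · simp [h2]
    · simp only [propNF_app, List.map_append, List.map_cons, List.any_append, List.any_cons,
        h1, h2, h3]

theorem starfree_prop {u w : Term (HSig S) Empty}
    (hu : Uses (fun a : HSig S => a.2 ≠ Mark3.star) u) (h : Rewrite PropagateRoot u w) :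
    Uses (fun a : HSig S => a.2 ≠ Mark3.star) w := by
  induction h with
  | root h =>
    rcases h with ⟨n, m, xs, ys⟩
    rw [uses_app] at hu ⊢
    exact ⟨by simp, hu.2⟩
  | congr f pre post hr ih =>
    rw [uses_app] at hu ⊢
    refine ⟨hu.1, fun t ht => ?_⟩
    rcases List.mem_append.mp ht with h1 | h1
    · exact hu.2 t (List.mem_append.mpr (Or.inl h1))
    · rcases List.mem_cons.mp h1 with h2 | h2
      · exact h2 ▸ ih (hu.2 _ (List.mem_append.mpr (Or.inr (List.mem_cons_self))))
      · exact hu.2 t (List.mem_append.mpr (Or.inr (List.mem_cons_of_mem _ h2)))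

/-! ### Normal forms for propagate -/

theorem root_ul {u : Term (HSig S) Empty} (hfix : propNF u = u)
    (hsf : Uses (fun a : HSig S => a.2 ≠ Mark3.star) u) (hul : hasUL u = true) :
    ∃ m us, u = Term.app (m, Mark3.ul) us := by
  cases u with
  | var x => exact x.elim
  | app a ts =>
    obtain ⟨f, m⟩ := a
    cases m with
    | ul => exact ⟨f, ts, rfl⟩
    | star => exact absurd rfl ((uses_app.mp hsf).1)
    | plain =>
      rw [hasUL_app] at hul
      simp only [Mark3.isULB, Bool.false_or] at hul
      rw [propNF_app] at hfix
      rw [hul] at hfix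
      simp only [markOf_plain_true, Term.app.injEq, Prod.mk.injEq] at hfix
      exact absurd hfix.1.2.symm (by simp)

theorem propNF_eq_self_of_nf (t0 : Term (HSig S) Empty)
    (hsf : Uses (fun a : HSig S => a.2 ≠ Mark3.star) t0)
    (hnf : ∀ x, ¬ TreeRel PropagateRoot (Tree.mk t0) x) : propNF t0 = t0 := by
  induction t0 using Term.my_ind with
  | hv x => exact x.elim
  | ha a ts ih =>
    obtain ⟨f, m⟩ := a
    have hch : ∀ t ∈ ts, propNF t = t := by
      intro t ht
      obtain ⟨pre, post, hpre⟩ := List.append_of_mem ht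
      subst hpre
      refine ih t ht ((uses_app.mp hsf).2 t ht) ?_
      intro x hx
      rcases hx with ⟨u, v, hu, hv, hr⟩
      refine hnf (Tree.mk (Term.app (f, m) (pre ++ v :: post))) ?_
      refine ⟨Term.app (f, m) (pre ++ u :: post), _, ?_, rfl, Rewrite.congr _ pre post hr⟩
      exact Quotient.sound (equiv_congr (Quotient.exact hu))
    have hmap : ts.map propNF = ts := (List.map_congr_left hch).trans (List.map_id ts)
    rw [propNF_app, hmap]
    cases m with
    | ul => rw [markOf_ul]
    | star => rw [markOf_star]
    | plain =>
      rcases hany : ts.any hasUL with _ | _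
      · rw [markOf_plain_false]
      · exfalso
        obtain ⟨u, hu, huul⟩ := List.any_eq_true.mp hany
        obtain ⟨pre, post, hpre⟩ := List.append_of_mem hu
        obtain ⟨m', us, hushape⟩ := root_ul (hch u hu) ((uses_app.mp hsf).2 u hu) huul
        refine hnf (Tree.mk (Term.app (f, Mark3.ul) (u :: (pre ++ post)))) ?_
        refine ⟨Term.app (f, Mark3.plain) (u :: (pre ++ post)), _, ?_, rfl, ?_⟩
        · subst hpre; exact (mk_perm List.perm_middle :)
        · rw [hushape]; exact Rewrite.root (PropagateRoot.propagate f m' us (pre ++ post))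

theorem nf_unique {a t : Tree (HSig S) Empty}
    (h : Relation.ReflTransGen (TreeRel PropagateRoot) a t)
    (hnf : ∀ x, ¬ TreeRel PropagateRoot t x) :
    ∀ w, a = Tree.mk w → Uses (fun a : HSig S => a.2 ≠ Mark3.star) w →
      t = Tree.mk (propNF w) := by
  induction h using Relation.ReflTransGen.head_induction_on with
  | refl =>
    intro w hw hsf
    rw [hw] at hnf ⊢
    rw [propNF_eq_self_of_nf w hsf hnf]
  | head hab _ ih =>
    intro w hw hsf
    rcases hab with ⟨u, v, hau, hbv, hr⟩
    have hwu : TermEquiv w u := Quotient.exact (hw ▸ hau :)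
    have hsfu := uses_of_equiv hwu hsf
    have := ih v hbv (starfree_prop hsfu hr)
    rw [this, ← (hasUL_prop hr).2.2]
    exact (Quotient.sound (propNF_equiv hwu)).symm

end StarGames


namespace StarGames

variable {S : Type}

/-! ### Basic facts about chop steps and S-plain terms -/

def botLeaf : Term (HSig S) Empty := Term.app (none, Mark3.plain) []

theorem plain_botLeaf : PlainTerm (botLeaf (S := S)) :=
  Uses.app _ _ rfl (by simp)

theorem ltBot_none (lt : S → S → Prop) {f : SBot S} (hf : f ≠ none) : ltBot lt none f := by
  cases f with
  | none => exact absurd rfl hf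
  | some a => trivial

theorem splain_plain {u : Term (HSig S) Empty} (h : SPlainTerm u) : PlainTerm u :=
  uses_mono (fun _ ha => ha.1) h

theorem splain_noUL {u : Term (HSig S) Empty} (h : SPlainTerm u) : hasUL u = false :=
  hasUL_false_of_plain (splain_plain h)

theorem splain_starfree {u : Term (HSig S) Empty} (h : SPlainTerm u) :
    Uses (fun a : HSig S => a.2 ≠ Mark3.star) u :=
  uses_mono (fun _ ha => by rw [ha.1]; simp) h

theorem propNF_id_of_splain {u : Term (HSig S) Empty} (h : SPlainTerm u) : propNF u = u :=
  propNF_id_of_noUL (splain_noUL h)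

theorem hasUL_of_chop {lt : S → S → Prop} {a b : Term (HSig S) Empty}
    (h : Rewrite (ChopRoot lt) a b) : hasUL b = true := by
  induction h with
  | root h => rcases h with ⟨n, α, βs, xs, hβ⟩; simp [Mark3.isULB]
  | congr f pre post _ ih =>
    simp only [hasUL_app, List.any_append, List.any_cons, ih]
    simp

theorem starfree_of_chop {lt : S → S → Prop} {a b : Term (HSig S) Empty}
    (ha : Uses (fun a : HSig S => a.2 ≠ Mark3.star) a) (h : Rewrite (ChopRoot lt) a b) :
    Uses (fun a : HSig S => a.2 ≠ Mark3.star) b := by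
  induction h with
  | root h =>
    rcases h with ⟨n, α, βs, xs, hβ⟩
    rw [uses_app] at ha ⊢
    refine ⟨by simp, fun t ht => ?_⟩
    rcases List.mem_append.mp ht with h1 | h1
    · obtain ⟨β, _, rfl⟩ := List.mem_map.mp h1
      exact Uses.app _ _ (by simp) (by simp)
    · exact ha.2 t (List.mem_cons_of_mem _ h1)
  | congr f pre post hr ih =>
    rw [uses_app] at ha ⊢
    refine ⟨ha.1, fun t ht => ?_⟩
    rcases List.mem_append.mp ht with h1 | h1
    · exact ha.2 t (List.mem_append.mpr (Or.inl h1))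
    · rcases List.mem_cons.mp h1 with h2 | h2
      · exact h2 ▸ ih (ha.2 _ (List.mem_append.mpr (Or.inr (List.mem_cons_self))))
      · exact ha.2 t (List.mem_append.mpr (Or.inr (List.mem_cons_of_mem _ h2)))

theorem rootStar_swapStep {u w : Term (HSig S) Empty} (h : SwapStep u w) :
    SwapStep (rootStar u) (rootStar w) := by
  cases h with
  | root h =>
    rcases h with ⟨f, us, x, y, ws⟩
    exact Rewrite.root (SwapRoot.swap (f.1, Mark3.star) us x y ws)
  | congr f pre post hr => exact Rewrite.congr (f.1, Mark3.star) pre post hr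

theorem rootStar_equiv {u w : Term (HSig S) Empty} (h : TermEquiv u w) :
    TermEquiv (rootStar u) (rootStar w) := by
  induction h with
  | rel a b hab => exact Relation.EqvGen.rel _ _ (rootStar_swapStep hab)
  | refl a => exact Relation.EqvGen.refl _
  | symm a b _ ih => exact Relation.EqvGen.symm _ _ ih
  | trans a b c _ _ ih1 ih2 => exact Relation.EqvGen.trans _ _ _ ih1 ih2

/-! ### The main simulation lemma -/

theorem main_sim (lt : S → S → Prop) (g : ℕ) (hg : 1 ≤ g) {a b : Term (HSig S) Empty}
    (h : Rewrite (ChopRoot lt) a b) (ha : SPlainTerm a) :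
    ∃ v : Term (HSig S) Empty, PlainTerm v ∧
      Relation.ReflTransGen (TreeRel (StarHRoot lt)) (Tree.mk (rootStar a)) (Tree.mk v) ∧
      Relation.ReflTransGen (TreeRel (GRoot g)) (Tree.mk v) (Tree.mk (propNF b)) := by
  induction h with
  | root h =>
    rcases h with ⟨n, α, βs, xs, hβ⟩
    replace ha := uses_app.mp ha
    have hxsS : ∀ t ∈ xs, SPlainTerm t := fun t ht => ha.2 t (List.mem_cons_of_mem _ ht)
    have hα : α ≠ none := (uses_app.mp (ha.2 _ (List.mem_cons_self))).1.2
    set αs : Term (HSig S) Empty := Term.app (α, Mark3.star) [] with hαs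
    set bnode : SBot S → Term (HSig S) Empty :=
      fun β => Term.app (β, Mark3.plain) (List.replicate g botLeaf) with hbnode
    set bul : SBot S → Term (HSig S) Empty := fun β => Term.app (β, Mark3.ul) [] with hbul
    have αbot : Relation.ReflTransGen (TreeRel (StarHRoot lt)) (Tree.mk αs) (Tree.mk botLeaf) :=
      Relation.ReflTransGen.single
        (treeStep (Rewrite.root (StarHRoot.copy α none 0 [] (ltBot_none lt hα))))
    have αbnode : ∀ β ∈ βs,
        Relation.ReflTransGen (TreeRel (StarHRoot lt)) (Tree.mk αs) (Tree.mk (bnode β)) := by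
      intro β hβmem
      refine Relation.ReflTransGen.head
        (treeStep (Rewrite.root (StarHRoot.copy α β g [] (hβ β hβmem)))) ?_
      exact rtg_list (β, Mark3.plain) (forall₂_replicate' g αbot) []
    refine ⟨Term.app (n, Mark3.plain) ((βs.map bnode ++ List.replicate g botLeaf) ++ xs),
      ?_, ?_, ?_⟩
    · refine Uses.app _ _ rfl fun t ht => ?_
      rcases List.mem_append.mp ht with h1 | h1
      · rcases List.mem_append.mp h1 with h2 | h2
        · obtain ⟨β, _, rfl⟩ := List.mem_map.mp h2
          refine Uses.app _ _ rfl fun t' ht' => ?_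
          rw [List.eq_of_mem_replicate ht']; exact plain_botLeaf
        · rw [List.eq_of_mem_replicate h2]; exact plain_botLeaf
      · exact splain_plain (hxsS t h1)
    · have star1 : TreeRel (StarHRoot lt)
          (Tree.mk (Term.app (n, Mark3.star) (Term.app (α, Mark3.plain) [] :: xs)))
          (Tree.mk (Term.app (n, Mark3.plain) (List.replicate (βs.length + g) αs ++ xs))) :=
        treeStep (Rewrite.root (StarHRoot.down n α (βs.length + g) [] [] xs))
      have hf2 : List.Forall₂
          (fun u w => Relation.ReflTransGen (TreeRel (StarHRoot lt)) (Tree.mk u) (Tree.mk w))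
          (List.replicate (βs.length + g) αs ++ xs)
          ((βs.map bnode ++ List.replicate g botLeaf) ++ xs) := by
        refine List.rel_append ?_ ?_
        · rw [List.replicate_add]
          refine List.rel_append ?_ ?_
          · rw [show βs.length = (βs.map bnode).length by simp]
            refine forall₂_replicate fun y hy => ?_
            obtain ⟨β, hβmem, rfl⟩ := List.mem_map.mp hy
            exact αbnode β hβmem
          · exact forall₂_replicate' g αbot
        · exact forall₂_refl_tree xs
      have star2 := rtg_list (n, Mark3.plain) hf2 []
      exact Relation.ReflTransGen.head star1 star2
    · have hfgc : List.Forall₂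
          (fun u w => Relation.ReflTransGen (TreeRel (GRoot g)) (Tree.mk u) (Tree.mk w))
          ((βs.map bnode ++ List.replicate g botLeaf) ++ xs)
          ((βs.map bul ++ List.replicate g botLeaf) ++ xs) := by
        refine List.rel_append (List.rel_append ?_ ?_) ?_
        · refine forall₂_map_map fun β _ => Relation.ReflTransGen.single ?_
          exact treeStep (Rewrite.root (GRoot.gc β [] (List.replicate g botLeaf)
            (le_of_eq (List.length_replicate (n := g) (a := botLeaf)).symm)))
        · exact forall₂_refl_tree (List.replicate g botLeaf)
        · exact forall₂_refl_tree xs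
      have gc1 := rtg_list (n, Mark3.plain) hfgc []
      have hperm : ((βs.map bul ++ List.replicate g botLeaf) ++ xs).Perm
          ((βs.map bul ++ xs) ++ List.replicate g botLeaf) := by
        have h1 : (List.replicate g (botLeaf (S := S)) ++ xs).Perm
            (xs ++ List.replicate g botLeaf) := List.perm_append_comm
        simpa [List.append_assoc] using List.Perm.append_left (βs.map bul) h1
      have gc2 : TreeRel (GRoot g)
          (Tree.mk (Term.app (n, Mark3.plain) ((βs.map bul ++ List.replicate g botLeaf) ++ xs)))
          (Tree.mk (Term.app (n, Mark3.ul) (βs.map bul ++ xs))) := by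
        rw [mk_perm hperm]
        exact treeStep (Rewrite.root (GRoot.gc n (βs.map bul ++ xs)
          (List.replicate g botLeaf) (le_of_eq (List.length_replicate (n := g) (a := botLeaf)).symm)))
      have htarget : propNF (Term.app (n, Mark3.ul)
          ((βs.map fun β => Term.app (β, Mark3.ul) ([] : List (Term (HSig S) Empty))) ++ xs))
          = Term.app (n, Mark3.ul) (βs.map bul ++ xs) := by
        rw [propNF_app, markOf_ul, List.map_append, List.map_map]
        have h1 : βs.map (propNF ∘ fun β => Term.app (β, Mark3.ul) []) = βs.map bul := by
          refine List.map_congr_left fun β _ => ?_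
          simp [propNF_app, markOf_ul, hbul, Function.comp]
        have h2 : xs.map propNF = xs := (List.map_congr_left fun t ht =>
          propNF_id_of_splain (hxsS t ht)).trans (List.map_id xs)
        rw [h1, h2]
      rw [htarget]
      exact gc1.trans (Relation.ReflTransGen.single gc2)
  | @congr u w F pre post hr ih =>
    replace ha := uses_app.mp ha
    have haU : SPlainTerm u := ha.2 u (List.mem_append.mpr (Or.inr (List.mem_cons_self)))
    obtain ⟨v', hv'P, hv'star, hv'gc⟩ := ih haU
    obtain ⟨Fn, Fm⟩ := F
    have hFm : Fm = Mark3.plain := ha.1.1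
    subst hFm
    -- the shape of `u`
    have hushape : ∃ fa1 ys, u = Term.app (fa1, Mark3.plain) ys ∧ fa1 ≠ none := by
      cases u with
      | var x => exact x.elim
      | app fa ys =>
        obtain ⟨fa1, fam⟩ := fa
        have := (uses_app.mp haU).1
        exact ⟨fa1, ys, by rw [show fam = Mark3.plain from this.1], this.2⟩
    obtain ⟨fa1, ys, rfl, hfa1⟩ := hushape
    refine ⟨Term.app (Fn, Mark3.plain) (pre ++ v' :: (List.replicate g botLeaf ++ post)),
      ?_, ?_, ?_⟩
    · refine Uses.app _ _ rfl fun t ht => ?_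
      rcases List.mem_append.mp ht with h1 | h1
      · exact splain_plain (ha.2 t (List.mem_append.mpr (Or.inl h1)))
      · rcases List.mem_cons.mp h1 with h2 | h2
        · exact h2 ▸ hv'P
        · rcases List.mem_append.mp h2 with h3 | h3
          · rw [List.eq_of_mem_replicate h3]; exact plain_botLeaf
          · exact splain_plain (ha.2 t
              (List.mem_append.mpr (Or.inr (List.mem_cons_of_mem _ h3))))
    · have star1 : TreeRel (StarHRoot lt)
          (Tree.mk (Term.app (Fn, Mark3.star) (pre ++ Term.app (fa1, Mark3.plain) ys :: post)))
          (Tree.mk (Term.app (Fn, Mark3.plain)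
            (pre ++ List.replicate (g + 1) (Term.app (fa1, Mark3.star) ys) ++ post))) :=
        treeStep (Rewrite.root (StarHRoot.down Fn fa1 (g + 1) pre ys post))
      have abot : Relation.ReflTransGen (TreeRel (StarHRoot lt))
          (Tree.mk (Term.app (fa1, Mark3.star) ys)) (Tree.mk botLeaf) :=
        Relation.ReflTransGen.single
          (treeStep (Rewrite.root (StarHRoot.copy fa1 none 0 ys (ltBot_none lt hfa1))))
      have star2 : Relation.ReflTransGen (TreeRel (StarHRoot lt))
          (Tree.mk (Term.app (Fn, Mark3.plain)
            (pre ++ (List.replicate (g + 1) (Term.app (fa1, Mark3.star) ys) ++ post))))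
          (Tree.mk (Term.app (Fn, Mark3.plain)
            (pre ++ (v' :: (List.replicate g botLeaf ++ post))))) := by
        refine rtg_list (Fn, Mark3.plain) ?_ pre
        rw [List.replicate_succ, List.cons_append]
        refine List.Forall₂.cons hv'star (List.rel_append ?_ ?_)
        · exact forall₂_replicate' g abot
        · exact forall₂_refl_tree post
      refine Relation.ReflTransGen.head ?_ star2
      rw [← List.append_assoc]
      exact star1
    · have gc1 : Relation.ReflTransGen (TreeRel (GRoot g))
          (Tree.mk (Term.app (Fn, Mark3.plain) (pre ++ v' :: (List.replicate g botLeaf ++ post))))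
          (Tree.mk (Term.app (Fn, Mark3.plain)
            (pre ++ propNF w :: (List.replicate g botLeaf ++ post)))) := by
        have := rtg_plug (Fn, Mark3.plain) pre (List.replicate g botLeaf ++ post) hv'gc
        rwa [plug_mk, plug_mk] at this
      have hperm : (pre ++ propNF w :: (List.replicate g botLeaf ++ post)).Perm
          ((pre ++ propNF w :: post) ++ List.replicate g botLeaf) := by
        have h1 : (propNF w :: (List.replicate g (botLeaf (S := S)) ++ post)).Perm
            (propNF w :: (post ++ List.replicate g botLeaf)) :=
          List.Perm.cons _ List.perm_append_comm
        simpa [List.append_assoc] using List.Perm.append_left pre h1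
      have gc2 : TreeRel (GRoot g)
          (Tree.mk (Term.app (Fn, Mark3.plain)
            (pre ++ propNF w :: (List.replicate g botLeaf ++ post))))
          (Tree.mk (Term.app (Fn, Mark3.ul) (pre ++ propNF w :: post))) := by
        rw [mk_perm hperm]
        exact treeStep (Rewrite.root (GRoot.gc Fn (pre ++ propNF w :: post)
          (List.replicate g botLeaf) (le_of_eq (List.length_replicate (n := g) (a := botLeaf)).symm)))
      have htarget : propNF (Term.app (Fn, Mark3.plain) (pre ++ w :: post))
          = Term.app (Fn, Mark3.ul) (pre ++ propNF w :: post) := by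
        rw [propNF_app]
        have hany : (pre ++ w :: post).any hasUL = true := by
          simp [List.any_append, List.any_cons, hasUL_of_chop hr]
        rw [hany, markOf_plain_true, List.map_append, List.map_cons]
        have hpre : pre.map propNF = pre := (List.map_congr_left fun t ht =>
          propNF_id_of_splain (ha.2 t (List.mem_append.mpr (Or.inl ht)))).trans (List.map_id pre)
        have hpost : post.map propNF = post := (List.map_congr_left fun t ht =>
          propNF_id_of_splain (ha.2 t (List.mem_append.mpr
            (Or.inr (List.mem_cons_of_mem _ ht))))).trans (List.map_id post)
        rw [hpre, hpost]
      rw [htarget]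
      exact gc1.trans (Relation.ReflTransGen.single gc2)

end StarGames


namespace StarGames

/-- Let `(S, <)` be a well-founded partial order, `S' = S ∪ {⊥}` with `⊥` a fresh
least element, and `g ≥ 1`.  If `s` is a tree labeled over `S` and
`s →_chop · →_propagate^! t`, then there exists a tree `v` labeled over `S'`
such that `s ▷ s⋆ ▷* v ↪_g* t`, where `s⋆` denotes `s` with its root symbol
marked (a root put step) and `▷` is the `Star` relation over `S'`. -/
theorem chop_propagate_by_star
    {S : Type} (lt : S → S → Prop) (hirr : Irreflexive lt) (htrans : Transitive lt)
    (hwf : WellFounded lt) (g : ℕ) (hg : 1 ≤ g)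
    (s : Term (HSig S) Empty) (hs : SPlainTerm s) (t : Tree (HSig S) Empty)
    (h : ∃ c : Tree (HSig S) Empty,
          TreeRel (ChopRoot lt) (Tree.mk s) c ∧ MaxRed (TreeRel PropagateRoot) c t) :
    TreeRel (StarHRoot lt) (Tree.mk s) (Tree.mk (rootStar s)) ∧
    ∃ v : Term (HSig S) Empty, PlainTerm v ∧
      Relation.ReflTransGen (TreeRel (StarHRoot lt))
        (Tree.mk (rootStar s)) (Tree.mk v) ∧
      Relation.ReflTransGen (TreeRel (GRoot g)) (Tree.mk v) t := by
  obtain ⟨c, hchop, hred⟩ := h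
  obtain ⟨s₁, c₁, hs1, hc1, hrw⟩ := hchop
  have hequiv : TermEquiv s s₁ := Quotient.exact hs1
  have hs₁ : SPlainTerm s₁ := uses_of_equiv hequiv hs
  have hsf : Uses (fun a : HSig S => a.2 ≠ Mark3.star) c₁ :=
    starfree_of_chop (splain_starfree hs₁) hrw
  have ht : t = Tree.mk (propNF c₁) := nf_unique (hc1 ▸ hred.1) hred.2 c₁ rfl hsf
  obtain ⟨v, hvP, hvstar, hvgc⟩ := main_sim lt g hg hrw hs₁
  constructor
  · cases s with
    | var x => exact x.elim
    | app a ts =>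
      obtain ⟨f, m⟩ := a
      have hm : m = Mark3.plain := (uses_app.mp hs).1.1
      subst hm
      exact ⟨_, _, rfl, rfl, Rewrite.root (StarHRoot.put f ts)⟩
  · refine ⟨v, hvP, ?_, ht ▸ hvgc⟩
    have heq : Tree.mk (rootStar s) = Tree.mk (rootStar s₁) :=
      Quotient.sound (rootStar_equiv hequiv)
    rw [heq]
    exact hvstar


end StarGames
end
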